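/- arXiv:math/0412551 — 4 statements merged into one kernel-verified Lean document; each statement's English description precedes it below -/
import Mathlib

section
/- Let C ⊆ L^∞(Ω, F, P) be a norm-closed convex cone with C ∩ L^∞_+ = {0} and -L^∞_+ ⊆ C. Then the set C₁ = {x ∈ C : ess inf x ≥ -1} is bounded in probability, i.e., for every α > 0 there exists M > 0 such that P(x ≥ M) ≤ α for all x ∈ C₁. -/
/-!
If `C₁` is not bounded in probability, there are `α > 0` and, for every `n`, some `x ∈ C₁` with
`P(x ≥ n) > α`. Since `C - L^∞_+ ⊆ C`, the truncation `min (x / n) 1` lies in `C`; it takes values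
in `[-1/n, 1]` and has mean at least `α - 1/n`. These sets of truncations are nested, convex and
bounded in `L²`, so their `L²`-closures have a common point `u`. A subsequence of approximants
converges to `u` almost surely, hence `0 ≤ u` and `E u ≥ α`. By Egorov's theorem the convergence
is uniform off a set `t` of arbitrarily small measure; as `C` is norm closed and `C - L^∞_+ ⊆ C`,
this puts `u 𝟙_tᶜ` in `C ∩ L^∞_+ = {0}`. Hence `u = 0`, contradicting `E u ≥ α > 0`.
-/

open MeasureTheory Filter Topology

theorem Convex.add_mem_of_smul_mem {E : Type*} [AddCommGroup E] [Module ℝ E] {C : Set E}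
    (hconv : Convex ℝ C) (hcone : ∀ c : ℝ, 0 ≤ c → ∀ x ∈ C, c • x ∈ C) {x y : E} (hx : x ∈ C)
    (hy : y ∈ C) : x + y ∈ C := by
  have h := hcone 2 zero_le_two _ (hconv hx hy (by norm_num : (0 : ℝ) ≤ 1 / 2)
    (by norm_num : (0 : ℝ) ≤ 1 / 2) (by norm_num))
  rwa [smul_add, smul_smul, smul_smul, show (2 : ℝ) * (1 / 2) = 1 by norm_num, one_smul,
    one_smul] at h

section Hilbert

variable {E : Type*} [NormedAddCommGroup E] [InnerProductSpace ℝ E]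

theorem exists_mem_forall_sq_norm_sub_le [CompleteSpace E] {K : Set E} (hne : K.Nonempty)
    (hK : IsClosed K) (hconv : Convex ℝ K) :
    ∃ v ∈ K, ∀ w ∈ K, ‖w - v‖ ^ 2 ≤ ‖w‖ ^ 2 - ‖v‖ ^ 2 := by
  obtain ⟨v, hv, hmin⟩ := exists_norm_eq_iInf_of_complete_convex hne hK.isComplete hconv 0
  refine ⟨v, hv, fun w hw => ?_⟩
  have hinner := (norm_eq_iInf_iff_real_inner_le_zero hconv hv).1 hmin w hw
  have hw_eq : ‖w‖ ^ 2 = ‖v‖ ^ 2 + 2 * inner ℝ v (w - v) + ‖w - v‖ ^ 2 := by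
    rw [← norm_add_sq_real, add_sub_cancel]
  rw [zero_sub, inner_neg_left] at hinner
  linarith

/-- The minimal-norm points `p n` of the closures satisfy `‖p m - p n‖² ≤ ‖p m‖² - ‖p n‖²` for
`n ≤ m`, so they form a Cauchy sequence. -/
theorem nonempty_iInter_closure_of_antitone_convex [CompleteSpace E] {S : ℕ → Set E}
    (hS : Antitone S) (hconv : ∀ n, Convex ℝ (S n)) (hne : ∀ n, (S n).Nonempty)
    (hbdd : Bornology.IsBounded (S 0)) :
    (⋂ n, closure (S n)).Nonempty := by
  choose p hp hp_min using fun n =>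
    exists_mem_forall_sq_norm_sub_le (hne n).closure isClosed_closure (hconv n).closure
  have hp_mem : ∀ {m n}, n ≤ m → p m ∈ closure (S n) := fun hnm => closure_mono (hS hnm) (hp _)
  have hdist : ∀ {m n}, n ≤ m → ‖p m - p n‖ ^ 2 ≤ ‖p m‖ ^ 2 - ‖p n‖ ^ 2 :=
    fun hnm => hp_min _ _ (hp_mem hnm)
  have hmono : Monotone fun n => ‖p n‖ ^ 2 := fun n m hnm => by
    have := hdist hnm; nlinarith [sq_nonneg ‖p m - p n‖]
  obtain ⟨r, hr⟩ := hbdd.closure.subset_closedBall 0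
  have hbound : BddAbove (Set.range fun n => ‖p n‖ ^ 2) := by
    refine ⟨r ^ 2, ?_⟩
    rintro _ ⟨n, rfl⟩
    have := mem_closedBall_zero_iff.1 (hr (hp_mem (Nat.zero_le n)))
    exact pow_le_pow_left₀ (norm_nonneg _) this 2
  have hcauchy : CauchySeq p := by
    rw [Metric.cauchySeq_iff']
    intro ε hε
    obtain ⟨N, hN⟩ := Metric.cauchySeq_iff'.1 (tendsto_atTop_ciSup hmono hbound).cauchySeq (ε ^ 2)
      (by positivity)
    refine ⟨N, fun n hn => ?_⟩
    have h1 := hdist hn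
    have h2 := hN n hn
    rw [Real.dist_eq, abs_lt] at h2
    rw [dist_eq_norm]
    nlinarith [norm_nonneg (p n - p N)]
  obtain ⟨u, hu⟩ := cauchySeq_tendsto_of_complete hcauchy
  exact ⟨u, Set.mem_iInter.2 fun n =>
    isClosed_closure.mem_of_tendsto hu (eventually_atTop.2 ⟨n, fun m hm => hp_mem hm⟩)⟩

end Hilbert

namespace MeasureTheory

variable {Ω : Type*} [MeasurableSpace Ω] {P : Measure Ω}

theorem Lp.ae_norm_le_norm_top {E : Type*} [NormedAddCommGroup E] (x : Lp E ⊤ P) :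
    ∀ᵐ ω ∂P, ‖x ω‖ ≤ ‖x‖ := by
  have hne : eLpNormEssSup (⇑x) P ≠ ⊤ := by
    rw [← eLpNorm_exponent_top]; exact Lp.eLpNorm_ne_top x
  filter_upwards [enorm_ae_le_eLpNormEssSup (⇑x) P] with ω hω
  simpa [Lp.norm_def, eLpNorm_exponent_top] using ENNReal.toReal_mono hne hω

theorem Lp.ae_le_of_le_essInf (x : Lp ℝ ⊤ P) {a : ℝ} (ha : a ≤ essInf (⇑x) P) :
    ∀ᵐ ω ∂P, a ≤ x ω := by
  have hbdd : IsBoundedUnder (· ≥ ·) (ae P) ⇑x := by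
    refine isBoundedUnder_of_eventually_ge (a := -‖x‖) ?_
    filter_upwards [Lp.ae_norm_le_norm_top x] with ω hω
    exact neg_le_of_abs_le hω
  filter_upwards [ae_essInf_le hbdd] with ω hω
  exact ha.trans hω

variable {C : Set (Lp ℝ ⊤ P)}

variable (C) in
def truncatedSet (α ε : ℝ) : Set (Lp ℝ ⊤ P) :=
  {c ∈ C | (∀ᵐ ω ∂P, -ε ≤ c ω ∧ c ω ≤ 1) ∧ α - ε ≤ ∫ ω, c ω ∂P}

theorem truncatedSet_mono (α : ℝ) : Monotone (truncatedSet C α) :=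
  fun _ _ hε _ ⟨hc, hbd, hint⟩ =>
    ⟨hc, hbd.mono fun _ h => ⟨by linarith [h.1], h.2⟩, by linarith⟩

section FiniteMeasure

variable [IsFiniteMeasure P]

section Inclusion

variable {E : Type*} [NormedAddCommGroup E] [NormedSpace ℝ E]

variable (P E) in
noncomputable def Lp.topToLp (q : ENNReal) [Fact (1 ≤ q)] : Lp E ⊤ P →L[ℝ] Lp E q P :=
  LinearMap.mkContinuous
    { toFun := fun x => ((Lp.memLp x).mono_exponent le_top).toLp x
      map_add' := fun x y => by
        rw [← MemLp.toLp_add]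
        exact MemLp.toLp_congr _ _ (Lp.coeFn_add x y)
      map_smul' := fun a x => by
        rw [← MemLp.toLp_const_smul]
        exact MemLp.toLp_congr _ _ (Lp.coeFn_smul a x) }
    (measureUnivNNReal P ^ q.toReal⁻¹) fun x => by
      refine Lp.norm_le_of_ae_bound (norm_nonneg x) ?_
      filter_upwards [MemLp.coeFn_toLp ((Lp.memLp x).mono_exponent le_top),
        Lp.ae_norm_le_norm_top x] with ω h1 h2
      exact (congrArg norm h1).le.trans h2

theorem Lp.coeFn_topToLp (q : ENNReal) [Fact (1 ≤ q)] (x : Lp E ⊤ P) :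
    ⇑(Lp.topToLp P E q x) =ᵐ[P] ⇑x :=
  MemLp.coeFn_toLp ((Lp.memLp x).mono_exponent le_top)

end Inclusion

theorem exists_mem_ae_eq_min_one (hsub : ∀ c ∈ C, ∀ y : Lp ℝ ⊤ P, 0 ≤ᵐ[P] ⇑y → c - y ∈ C)
    {x : Lp ℝ ⊤ P} (hx : x ∈ C) : ∃ y ∈ C, ∀ᵐ ω ∂P, y ω = min (x ω) 1 := by
  refine ⟨_, hsub x hx (Lp.posPart (x - Lp.const ⊤ P 1)) ?_, ?_⟩
  · filter_upwards [Lp.coeFn_posPart (x - Lp.const ⊤ P 1)] with ω hω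
    simp [hω]
  · filter_upwards [Lp.coeFn_sub x (Lp.posPart (x - Lp.const ⊤ P 1)),
      Lp.coeFn_posPart (x - Lp.const ⊤ P 1), Lp.coeFn_sub x (Lp.const ⊤ P 1),
      Lp.coeFn_const ⊤ P (1 : ℝ)] with ω h1 h2 h3 h4
    simp only [h1, Pi.sub_apply, h2, h3, h4, Function.const_apply]
    rcases le_total (x ω) 1 with h | h
    · rw [max_eq_right (by linarith), min_eq_left h, sub_zero]
    · rw [max_eq_left (by linarith), min_eq_right h, sub_sub_cancel]

theorem mem_of_forall_ae_le_add (hclosed : IsClosed C)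
    (hsub : ∀ c ∈ C, ∀ y : Lp ℝ ⊤ P, 0 ≤ᵐ[P] ⇑y → c - y ∈ C) {f : Lp ℝ ⊤ P}
    (h : ∀ η > 0, ∃ c ∈ C, ∀ᵐ ω ∂P, f ω ≤ c ω + η) : f ∈ C := by
  have hmem : ∀ η > 0, f - Lp.const ⊤ P η ∈ C := by
    intro η hη
    obtain ⟨c, hc, hfc⟩ := h η hη
    rw [← sub_sub_cancel c (f - Lp.const ⊤ P η)]
    refine hsub c hc _ ?_
    filter_upwards [hfc, Lp.coeFn_sub c (f - Lp.const ⊤ P η), Lp.coeFn_sub f (Lp.const ⊤ P η),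
      Lp.coeFn_const ⊤ P η] with ω h1 h2 h3 h4
    simp only [Pi.zero_apply, h2, Pi.sub_apply, h3, h4, Function.const_apply]
    linarith
  have hcont : Continuous (Lp.const ⊤ P : ℝ → Lp ℝ ⊤ P) := (Lp.constL ⊤ P ℝ).continuous
  have hlim : Tendsto (fun η => f - Lp.const ⊤ P η) (𝓝[>] 0) (𝓝 f) := by
    have := tendsto_const_nhds (x := f).sub (hcont.tendsto 0)
    simpa using tendsto_nhdsWithin_of_tendsto_nhds this
  exact hclosed.mem_of_tendsto hlim (eventually_nhdsWithin_of_forall hmem)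

theorem convex_truncatedSet (hconv : Convex ℝ C) (α ε : ℝ) : Convex ℝ (truncatedSet C α ε) := by
  intro x ⟨hx, hxb, hxi⟩ y ⟨hy, hyb, hyi⟩ a b ha hb hab
  have hxy : ⇑(a • x + b • y) =ᵐ[P] fun ω => a * x ω + b * y ω := by
    filter_upwards [Lp.coeFn_add (a • x) (b • y), Lp.coeFn_smul a x, Lp.coeFn_smul b y]
      with ω h1 h2 h3
    simp only [h1, Pi.add_apply, h2, h3, Pi.smul_apply, smul_eq_mul]
  refine ⟨hconv hx hy ha hb hab, ?_, ?_⟩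
  · filter_upwards [hxy, hxb, hyb] with ω h1 ⟨hx1, hx2⟩ ⟨hy1, hy2⟩
    rw [h1]
    constructor <;> nlinarith
  · have hix : Integrable (⇑x) P := (Lp.memLp x).integrable le_top
    have hiy : Integrable (⇑y) P := (Lp.memLp y).integrable le_top
    rw [integral_congr_ae hxy, integral_add (hix.const_mul a) (hiy.const_mul b),
      integral_const_mul, integral_const_mul]
    have hconst : a * (α - ε) + b * (α - ε) = α - ε := by rw [← add_mul, hab, one_mul]
    nlinarith [mul_le_mul_of_nonneg_left hxi ha, mul_le_mul_of_nonneg_left hyi hb]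

theorem isBounded_truncatedSet (α ε : ℝ) : Bornology.IsBounded (truncatedSet C α ε) := by
  refine isBounded_iff_forall_norm_le.2 ⟨max ε 1, fun c ⟨_, hc, _⟩ => ?_⟩
  have := Lp.norm_le_of_ae_bound (le_max_right ε 1 |>.trans' zero_le_one) (hc.mono fun ω h =>
    (show ‖c ω‖ ≤ max ε 1 from abs_le.2 ⟨by linarith [neg_le_neg (le_max_left ε 1), h.1],
      h.2.trans (le_max_right ε 1)⟩))
  simpa using this

theorem exists_seq_tendsto_ae_of_antitone {K : ℕ → Set (Lp ℝ ⊤ P)} (hK : Antitone K)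
    (hconv : ∀ n, Convex ℝ (K n)) (hne : ∀ n, (K n).Nonempty) (hbdd : Bornology.IsBounded (K 0)) :
    ∃ (c : ℕ → Lp ℝ ⊤ P) (g : Ω → ℝ), (∀ n, c n ∈ K n) ∧ StronglyMeasurable g ∧
      ∀ᵐ ω ∂P, Tendsto (fun n => c n ω) atTop (𝓝 (g ω)) := by
  set T := Lp.topToLp P ℝ 2
  obtain ⟨u, hu⟩ := nonempty_iInter_closure_of_antitone_convex (S := fun n => T '' K n)
    (fun _ _ h => Set.image_mono (hK h)) (fun n => (hconv n).linear_image T.toLinearMap)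
    (fun n => (hne n).image T) (T.lipschitz.isBounded_image hbdd)
  have happrox : ∀ n : ℕ, ∃ c ∈ K n, dist (T c) u < 1 / ((n : ℝ) + 1) := fun n => by
    obtain ⟨_, ⟨c, hc, rfl⟩, hcu⟩ :=
      Metric.mem_closure_iff.1 (Set.mem_iInter.1 hu n) _ Nat.one_div_pos_of_nat
    exact ⟨c, hc, by rwa [dist_comm]⟩
  choose c hcK hcu using happrox
  have hTc : Tendsto (fun n => T (c n)) atTop (𝓝 u) :=
    tendsto_iff_dist_tendsto_zero.2 (squeeze_zero (fun _ => dist_nonneg) (fun n => (hcu n).le)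
      tendsto_one_div_add_atTop_nhds_zero_nat)
  obtain ⟨ψ, hψ, hψu⟩ := (tendstoInMeasure_of_tendsto_Lp hTc).exists_seq_tendsto_ae
  refine ⟨c ∘ ψ, u, fun n => hK (hψ.id_le n) (hcK (ψ n)), Lp.stronglyMeasurable u, ?_⟩
  filter_upwards [hψu, ae_all_iff.2 fun n => Lp.coeFn_topToLp 2 (c n)] with ω h1 h2
  exact h1.congr fun n => h2 (ψ n)

theorem exists_mem_ae_eq_indicator_of_tendstoUniformlyOn (hclosed : IsClosed C)
    (hsub : ∀ c ∈ C, ∀ y : Lp ℝ ⊤ P, 0 ≤ᵐ[P] ⇑y → c - y ∈ C) {c : ℕ → Lp ℝ ⊤ P}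
    (hc : ∀ n, c n ∈ C) {ε : ℕ → ℝ} (hε : Tendsto ε atTop (𝓝 0))
    (hcε : ∀ n, ∀ᵐ ω ∂P, -ε n ≤ c n ω) {g : Ω → ℝ} (hg : StronglyMeasurable g) {t : Set Ω}
    (ht : MeasurableSet t)
    (hunif : TendstoUniformlyOn (fun n ω => c n ω) g atTop tᶜ) :
    ∃ f ∈ C, ⇑f =ᵐ[P] tᶜ.indicator g := by
  obtain ⟨N, hN⟩ := (Metric.tendstoUniformlyOn_iff.1 hunif 1 one_pos).exists
  have hmem : MemLp (tᶜ.indicator g) ⊤ P := by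
    refine memLp_top_of_bound (hg.indicator ht.compl).aestronglyMeasurable (‖c N‖ + 1) ?_
    filter_upwards [Lp.ae_norm_le_norm_top (c N)] with ω hω
    by_cases hωt : ω ∈ tᶜ
    · have := hN ω hωt
      rw [dist_eq_norm] at this
      rw [Set.indicator_of_mem hωt]
      linarith [norm_le_norm_add_norm_sub' (g ω) (c N ω)]
    · rw [Set.indicator_of_notMem hωt, norm_zero]; positivity
  refine ⟨hmem.toLp _, mem_of_forall_ae_le_add hclosed hsub fun η hη => ?_, hmem.coeFn_toLp⟩
  obtain ⟨n, hn, hεn⟩ :=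
    ((Metric.tendstoUniformlyOn_iff.1 hunif η hη).and (hε.eventually (gt_mem_nhds hη))).exists
  refine ⟨c n, hc n, ?_⟩
  filter_upwards [hmem.coeFn_toLp, hcε n] with ω h1 h2
  rw [h1]
  by_cases hωt : ω ∈ tᶜ
  · have := hn ω hωt
    rw [Real.dist_eq, abs_lt] at this
    rw [Set.indicator_of_mem hωt]; linarith
  · rw [Set.indicator_of_notMem hωt]; linarith

theorem ae_eq_zero_of_tendsto_ae (hclosed : IsClosed C)
    (hsub : ∀ c ∈ C, ∀ y : Lp ℝ ⊤ P, 0 ≤ᵐ[P] ⇑y → c - y ∈ C)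
    (hC_pos : C ∩ {x : Lp ℝ ⊤ P | 0 ≤ᵐ[P] ⇑x} = {0}) {c : ℕ → Lp ℝ ⊤ P} (hc : ∀ n, c n ∈ C)
    {ε : ℕ → ℝ} (hε : Tendsto ε atTop (𝓝 0)) (hcε : ∀ n, ∀ᵐ ω ∂P, -ε n ≤ c n ω) {g : Ω → ℝ}
    (hg : StronglyMeasurable g)
    (hcg : ∀ᵐ ω ∂P, Tendsto (fun n => c n ω) atTop (𝓝 (g ω))) : g =ᵐ[P] 0 := by
  have hg0 : ∀ᵐ ω ∂P, 0 ≤ g ω := by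
    filter_upwards [hcg, ae_all_iff.2 hcε] with ω h1 h2
    exact le_of_tendsto_of_tendsto' (by simpa using hε.neg) h1 h2
  have hsmall : ∀ δ > 0, P {ω | g ω ≠ 0} ≤ ENNReal.ofReal δ := by
    intro δ hδ
    obtain ⟨t, ht, htδ, hunif⟩ :=
      tendstoUniformlyOn_of_ae_tendsto' (fun n => Lp.stronglyMeasurable (c n)) hg hcg hδ
    obtain ⟨f, hfC, hf⟩ :=
      exists_mem_ae_eq_indicator_of_tendstoUniformlyOn hclosed hsub hc hε hcε hg ht hunif
    have hf0 : f = 0 := by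
      have hf_pos : f ∈ C ∩ {x : Lp ℝ ⊤ P | 0 ≤ᵐ[P] ⇑x} := ⟨hfC, by
        filter_upwards [hf, hg0] with ω h1 h2
        exact h1 ▸ Set.indicator_apply_nonneg fun _ => h2⟩
      rwa [hC_pos] at hf_pos
    refine (measure_mono_ae ?_).trans htδ
    filter_upwards [hf0 ▸ hf, Lp.coeFn_zero ℝ ⊤ P] with ω h1 h2 hgω
    by_contra hωt
    rw [h2, Set.indicator_of_mem hωt] at h1
    exact hgω h1.symm
  rw [EventuallyEq, ae_iff]
  refine le_antisymm (ENNReal.le_of_forall_pos_le_add fun δ hδ _ => ?_) bot_le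
  simpa using hsmall δ hδ

theorem le_integral_of_tendsto_ae {α : ℝ} {c : ℕ → Lp ℝ ⊤ P} {ε : ℕ → ℝ}
    (hε : Tendsto ε atTop (𝓝 0)) (hε1 : ∀ n, ε n ≤ 1) (hc : ∀ n, c n ∈ truncatedSet C α (ε n))
    {g : Ω → ℝ} (hcg : ∀ᵐ ω ∂P, Tendsto (fun n => c n ω) atTop (𝓝 (g ω))) :
    α ≤ ∫ ω, g ω ∂P := by
  have hlim : Tendsto (fun n => ∫ ω, c n ω ∂P) atTop (𝓝 (∫ ω, g ω ∂P)) := by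
    refine tendsto_integral_of_dominated_convergence (fun _ => 1)
      (fun n => Lp.aestronglyMeasurable _) (integrable_const 1) (fun n => ?_) hcg
    filter_upwards [(hc n).2.1] with ω h
    rw [Real.norm_eq_abs, abs_le]
    exact ⟨by linarith [hε1 n, h.1], h.2⟩
  exact le_of_tendsto_of_tendsto' (by simpa using tendsto_const_nhds.sub hε) hlim
    fun n => (hc n).2.2

end FiniteMeasure

theorem truncatedSet_nonempty [IsProbabilityMeasure P]
    (hsub : ∀ c ∈ C, ∀ y : Lp ℝ ⊤ P, 0 ≤ᵐ[P] ⇑y → c - y ∈ C)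
    (hcone : ∀ c : ℝ, 0 ≤ c → ∀ x ∈ C, c • x ∈ C) {α M : ℝ} (hM : 0 < M) {x : Lp ℝ ⊤ P}
    (hx : x ∈ C) (hx1 : ∀ᵐ ω ∂P, -1 ≤ x ω) (hα : ENNReal.ofReal α ≤ P {ω | M ≤ x ω}) :
    (truncatedSet C α M⁻¹).Nonempty := by
  obtain ⟨y, hy, hy_eq⟩ := exists_mem_ae_eq_min_one hsub (hcone M⁻¹ (by positivity) x hx)
  have hxM : ∀ᵐ ω ∂P, y ω = min (M⁻¹ * x ω) 1 := by
    filter_upwards [hy_eq, Lp.coeFn_smul M⁻¹ x] with ω h1 h2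
    rw [h1, h2, Pi.smul_apply, smul_eq_mul]
  set A := {ω | M ≤ x ω}
  have hA : MeasurableSet A :=
    measurableSet_le measurable_const (Lp.stronglyMeasurable x).measurable
  have hMinv : 0 < M⁻¹ := inv_pos.2 hM
  have hlow : ∀ᵐ ω ∂P, A.indicator (fun _ => (1 : ℝ)) ω - M⁻¹ ≤ y ω := by
    filter_upwards [hxM, hx1] with ω h1 h2
    rw [h1]
    by_cases hω : ω ∈ A
    · have : 1 ≤ M⁻¹ * x ω := by
        rw [← inv_mul_cancel₀ hM.ne']; exact mul_le_mul_of_nonneg_left hω hMinv.le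
      simp [hω, min_eq_right this, hMinv.le]
    · simp only [Set.indicator_of_notMem hω, zero_sub]
      exact le_min (by nlinarith) (by linarith)
  refine ⟨y, hy, ?_, ?_⟩
  · filter_upwards [hxM, hx1] with ω h1 h2
    rw [h1]
    exact ⟨le_min (by nlinarith) (by linarith), min_le_right _ _⟩
  · have hPA : α ≤ P.real A := by
      rwa [measureReal_def, ← ENNReal.ofReal_le_iff_le_toReal (measure_ne_top P A)]
    have hind : Integrable (A.indicator fun _ => (1 : ℝ)) P := (integrable_const 1).indicator hA
    have := integral_mono_ae (f := fun ω => A.indicator (fun _ => (1 : ℝ)) ω - M⁻¹)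
      (hind.sub (integrable_const M⁻¹)) ((Lp.memLp y).integrable le_top) hlow
    rw [integral_sub hind (integrable_const _), integral_indicator_const 1 hA,
      integral_const] at this
    simp only [probReal_univ, smul_eq_mul, one_mul, mul_one] at this
    linarith

end MeasureTheory

/-- For a norm-closed convex cone `C ⊆ L^∞` with `C ∩ L^∞_+ = {0}` and
`-L^∞_+ ⊆ C`, the set `C₁ = {x ∈ C : ess inf x ≥ -1}` is bounded in probability. -/
theorem stmt0 {Ω : Type*} [MeasurableSpace Ω] (P : Measure Ω) [IsProbabilityMeasure P]
    (C : Set (Lp ℝ ⊤ P))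
    (hclosed : IsClosed C) (hconv : Convex ℝ C)
    (hcone : ∀ (c : ℝ), 0 ≤ c → ∀ x ∈ C, c • x ∈ C)
    (hC_pos : C ∩ {x : Lp ℝ ⊤ P | 0 ≤ᵐ[P] ⇑x} = {0})
    (hneg : ∀ x : Lp ℝ ⊤ P, 0 ≤ᵐ[P] ⇑x → -x ∈ C) :
    ∀ α : ℝ, 0 < α → ∃ M : ℝ, 0 < M ∧
      ∀ x ∈ C, (-1 : ℝ) ≤ essInf (⇑x) P →
        P {ω | M ≤ x ω} ≤ ENNReal.ofReal α := by
  intro α hα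
  by_contra! hcon
  have hsub : ∀ c ∈ C, ∀ y : Lp ℝ ⊤ P, 0 ≤ᵐ[P] ⇑y → c - y ∈ C := fun c hc y hy => by
    simpa [sub_eq_add_neg] using hconv.add_mem_of_smul_mem hcone hc (hneg y hy)
  set ε : ℕ → ℝ := fun n => ((n : ℝ) + 1)⁻¹
  have hε : Tendsto ε atTop (𝓝 0) := by
    simpa using tendsto_one_div_add_atTop_nhds_zero_nat (𝕜 := ℝ)
  have hε1 : ∀ n, ε n ≤ 1 := fun n => inv_le_one_of_one_le₀ (by simp)
  have hK : ∀ n, (truncatedSet C α (ε n)).Nonempty := fun n => by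
    obtain ⟨x, hx, hinf, hPx⟩ := hcon ((n : ℝ) + 1) (by positivity)
    exact truncatedSet_nonempty hsub hcone (by positivity) hx (Lp.ae_le_of_le_essInf x hinf)
      hPx.le
  have hanti : Antitone fun n => truncatedSet C α (ε n) := fun m n hmn =>
    truncatedSet_mono α (inv_anti₀ (by positivity) (by gcongr))
  obtain ⟨c, g, hcK, hg, hcg⟩ := exists_seq_tendsto_ae_of_antitone hanti
    (fun n => convex_truncatedSet hconv α _) hK (isBounded_truncatedSet α _)
  have hg0 : g =ᵐ[P] 0 := ae_eq_zero_of_tendsto_ae hclosed hsub hC_pos (fun n => (hcK n).1) hε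
    (fun n => (hcK n).2.1.mono fun _ h => h.1) hg hcg
  have hαg := le_integral_of_tendsto_ae hε hε1 hcK hcg
  rw [integral_congr_ae hg0, Pi.zero_def, integral_zero] at hαg
  linarith
end

section
/- Let X be a Banach space with dual X*. Let K ⊆ X* be a weak-* closed convex cone with K ∩ (-K) = {0} admitting a strictly positive functional in X, and let C ⊆ X* be a weak-* closed convex cone with -K ⊆ C and C ∩ K = {0}. Then there exists x ∈ X with ⟨κ, x⟩ > 0 for all κ ∈ K \ {0} and ⟨c, x⟩ ≤ 0 for all c ∈ C. -/
/-!
Normalising by `x₀`, every nonzero `κ ∈ K` is a positive multiple of a point of the base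
`B = {κ ∈ K | κ x₀ = 1}`, which is weak-* closed and disjoint from `C`. Since weak-* continuous
functionals are evaluations at points of `X`, Hahn–Banach gives for each `κ ∈ B` a point
`y ∈ X` with `μ y ≤ 0` for all `μ ∈ C` and `κ y > 0`. By Banach–Alaoglu the weak-* dual is
σ-compact, hence Lindelöf, so countably many such points `yₙ` already detect all of `B`, and
`x = ∑ aₙ yₙ` with small positive weights works: `-K ⊆ C` makes every `κ ∈ K` nonnegative on
all `yₙ`.
-/

open Set

section Separation

variable {E : Type*} [TopologicalSpace E] [AddCommGroup E] [IsTopologicalAddGroup E]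
  [Module ℝ E] [ContinuousSMul ℝ E] [LocallyConvexSpace ℝ E]

theorem exists_nonpos_on_cone_pos_of_notMem {C : Set E} (hC_closed : IsClosed C)
    (hC_conv : Convex ℝ C) (hC_cone : ∀ c : ℝ, 0 ≤ c → ∀ μ ∈ C, c • μ ∈ C) (hC0 : 0 ∈ C)
    {x : E} (hx : x ∉ C) : ∃ f : StrongDual ℝ E, (∀ μ ∈ C, f μ ≤ 0) ∧ 0 < f x := by
  obtain ⟨f, u, hfC, hux⟩ := geometric_hahn_banach_closed_point hC_conv hC_closed hx
  have hu : 0 < u := by simpa using hfC 0 hC0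
  refine ⟨f, fun μ hμ => ?_, hu.trans hux⟩
  by_contra! hfμ
  -- rescaling `μ` so that `f` takes the value `u` contradicts the strict bound on `C`
  simpa [hfμ.ne'] using hfC ((u / f μ) • μ) (hC_cone _ (div_pos hu hfμ).le μ hμ)

end Separation

namespace WeakDual

theorem exists_eq_apply {𝕜 X : Type*} [NontriviallyNormedField 𝕜] [AddCommGroup X]
    [TopologicalSpace X] [Module 𝕜 X] (f : StrongDual 𝕜 (WeakDual 𝕜 X)) :
    ∃ y : X, ∀ φ : WeakDual 𝕜 X, f φ = φ y := by
  obtain ⟨y, rfl⟩ := LinearMap.dualEmbedding_surjective (topDualPairing 𝕜 X) f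
  exact ⟨y, fun _ => rfl⟩

instance sigmaCompactSpace {𝕜 X : Type*} [NontriviallyNormedField 𝕜] [ProperSpace 𝕜]
    [SeminormedAddCommGroup X] [NormedSpace 𝕜 X] : SigmaCompactSpace (WeakDual 𝕜 X) :=
  ⟨fun n : ℕ => toStrongDual ⁻¹' Metric.closedBall 0 n, fun n => isCompact_closedBall 0 n,
    iUnion_eq_univ_iff.2 fun φ => by simpa using exists_nat_ge ‖toStrongDual φ‖⟩

variable {X : Type*} [NormedAddCommGroup X] [NormedSpace ℝ X]

instance : LocallyConvexSpace ℝ (WeakDual ℝ X) := WeakBilin.locallyConvexSpace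

theorem exists_nonpos_on_cone_pos_of_notMem {C : Set (WeakDual ℝ X)} (hC_closed : IsClosed C)
    (hC_conv : Convex ℝ C) (hC_cone : ∀ c : ℝ, 0 ≤ c → ∀ μ ∈ C, c • μ ∈ C) (hC0 : 0 ∈ C)
    {κ : WeakDual ℝ X} (hκ : κ ∉ C) : ∃ y : X, (∀ μ ∈ C, μ y ≤ 0) ∧ 0 < κ y := by
  obtain ⟨f, hfC, hfκ⟩ :=
    _root_.exists_nonpos_on_cone_pos_of_notMem hC_closed hC_conv hC_cone hC0 hκ
  obtain ⟨y, hy⟩ := exists_eq_apply f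
  exact ⟨y, fun μ hμ => hy μ ▸ hfC μ hμ, hy κ ▸ hfκ⟩

theorem exists_countable_nonpos_on_cone_forall_exists_pos {B C : Set (WeakDual ℝ X)}
    (hB : IsClosed B) (hC_closed : IsClosed C) (hC_conv : Convex ℝ C)
    (hC_cone : ∀ c : ℝ, 0 ≤ c → ∀ μ ∈ C, c • μ ∈ C) (hC0 : 0 ∈ C) (hBC : Disjoint B C) :
    ∃ V : Set X, V.Countable ∧ (∀ y ∈ V, ∀ μ ∈ C, μ y ≤ 0) ∧ ∀ κ ∈ B, ∃ y ∈ V, 0 < κ y := by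
  have hsep : ∀ κ ∈ B, ∃ y : X, (∀ μ ∈ C, μ y ≤ 0) ∧ 0 < κ y := fun κ hκ =>
    exists_nonpos_on_cone_pos_of_notMem hC_closed hC_conv hC_cone hC0 (hBC.notMem_of_mem_left hκ)
  choose! g hgC hgκ using hsep
  obtain ⟨S, hSB, hS, hBS⟩ := hB.isLindelof.elim_countable_subcover_image
    (c := fun κ => {μ : WeakDual ℝ X | 0 < μ (g κ)})
    (fun κ _ => isOpen_lt continuous_const (eval_continuous (g κ)))
    (fun κ hκ => mem_biUnion hκ (hgκ κ hκ))
  refine ⟨g '' S, hS.image g, forall_mem_image.2 fun κ hκ => hgC κ (hSB hκ), fun κ hκ => ?_⟩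
  obtain ⟨ν, hν, hκν⟩ := mem_iUnion₂.1 (hBS hκ)
  exact ⟨g ν, mem_image_of_mem g hν, hκν⟩

end WeakDual

theorem Set.Countable.exists_pos_combination {X : Type*} [NormedAddCommGroup X]
    [NormedSpace ℝ X] [CompleteSpace X] {V : Set X} (hV : V.Countable) :
    ∃ x : X, ∀ φ : StrongDual ℝ X, (∀ y ∈ V, 0 ≤ φ y) → 0 ≤ φ x ∧ ∀ y ∈ V, 0 < φ y → 0 < φ x := by
  obtain ⟨ε, hε, c, hεc, -⟩ := hV.exists_pos_hasSum_le one_pos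
  set a : X → ℝ := fun y => ε y / (1 + ‖y‖)
  have ha : ∀ y, 0 < a y := fun y => div_pos (hε y) (by positivity)
  have hsum : Summable fun y : V => a y • (y : X) := by
    refine Summable.of_norm_bounded hεc.summable fun y => ?_
    rw [norm_smul, Real.norm_of_nonneg (ha y).le, div_mul_eq_mul_div, div_le_iff₀ (by positivity)]
    nlinarith [hε y, norm_nonneg (y : X)]
  refine ⟨∑' y : V, a y • (y : X), fun φ hφ => ?_⟩
  have hφsum : HasSum (fun y : V => a y * φ y) (φ (∑' y : V, a y • (y : X))) := by
    simpa using hsum.hasSum.mapL φ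
  refine ⟨hφsum.nonneg fun (y : V) => mul_nonneg (ha y).le (hφ y y.2), fun y hy hφy => ?_⟩
  exact hasSum_lt (i := (⟨y, hy⟩ : V)) (fun (z : V) => mul_nonneg (ha z).le (hφ z z.2))
    (mul_pos (ha y) hφy) hasSum_zero hφsum

theorem stmt4_general {X : Type*} [NormedAddCommGroup X] [NormedSpace ℝ X] [CompleteSpace X]
    (K : Set (WeakDual ℝ X)) (hK_closed : IsClosed K)
    (hK_cone : ∀ (c : ℝ), 0 ≤ c → ∀ κ ∈ K, c • κ ∈ K)
    (x₀ : X) (hx₀ : ∀ κ ∈ K, κ ≠ 0 → 0 < κ x₀)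
    (C : Set (WeakDual ℝ X)) (hC_closed : IsClosed C) (hC_conv : Convex ℝ C)
    (hC_cone : ∀ (c : ℝ), 0 ≤ c → ∀ μ ∈ C, c • μ ∈ C)
    (hKC : ∀ κ ∈ K, -κ ∈ C)
    (hCK : C ∩ K = {0}) :
    ∃ x : X, (∀ κ ∈ K, κ ≠ 0 → 0 < κ x) ∧ (∀ c ∈ C, c x ≤ 0) := by
  have hC0 : (0 : WeakDual ℝ X) ∈ C := (hCK.superset (mem_singleton _)).1
  have hbase : Disjoint (K ∩ {κ | κ x₀ = 1}) C := by
    refine disjoint_left.2 fun κ ⟨hκK, hκ1⟩ hκC => ?_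
    obtain rfl : κ = 0 := hCK.subset ⟨hκC, hκK⟩
    exact zero_ne_one hκ1
  obtain ⟨V, hV, hVC, hVbase⟩ := WeakDual.exists_countable_nonpos_on_cone_forall_exists_pos
    (hK_closed.inter (isClosed_eq (WeakDual.eval_continuous x₀) continuous_const))
    hC_closed hC_conv hC_cone hC0 hbase
  obtain ⟨x, hx⟩ := hV.exists_pos_combination
  have hVK : ∀ κ ∈ K, ∀ y ∈ V, 0 ≤ κ y := fun κ hκ y hy =>
    neg_nonpos.1 (hVC y hy (-κ) (hKC κ hκ))
  refine ⟨x, fun κ hκ hne => ?_, fun c hc => ?_⟩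
  · have hκx₀ := hx₀ κ hκ hne
    obtain ⟨y, hy, hκy⟩ := hVbase ((κ x₀)⁻¹ • κ)
      ⟨hK_cone _ (inv_nonneg.2 hκx₀.le) κ hκ, inv_mul_cancel₀ hκx₀.ne'⟩
    exact (hx κ (hVK κ hκ)).2 y hy (pos_of_mul_pos_right hκy (inv_nonneg.2 hκx₀.le))
  · exact neg_nonneg.1 (hx (-c) fun y hy => neg_nonneg.2 (hVC y hy c hc)).1

/-- Kreps–Yan theorem for a dual Banach space with the weak-* topology:
Let `K ⊆ X*` be a weak-* closed convex cone with `K ∩ (-K) = {0}` admitting a strictly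
positive functional in `X`, and let `C ⊆ X*` be a weak-* closed convex cone with
`-K ⊆ C` and `C ∩ K = {0}`.  Then there is `x ∈ X` with `⟨κ, x⟩ > 0` for all
`κ ∈ K \ {0}` and `⟨c, x⟩ ≤ 0` for all `c ∈ C`. -/
theorem stmt4 {X : Type*} [NormedAddCommGroup X] [NormedSpace ℝ X] [CompleteSpace X]
    (K : Set (WeakDual ℝ X)) (hK_closed : IsClosed K) (hK_conv : Convex ℝ K)
    (hK_cone : ∀ (c : ℝ), 0 ≤ c → ∀ κ ∈ K, c • κ ∈ K)
    (hK_pointed : K ∩ (-K) = {0})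
    (x₀ : X) (hx₀ : ∀ κ ∈ K, κ ≠ 0 → 0 < κ x₀)
    (C : Set (WeakDual ℝ X)) (hC_closed : IsClosed C) (hC_conv : Convex ℝ C)
    (hC_cone : ∀ (c : ℝ), 0 ≤ c → ∀ μ ∈ C, c • μ ∈ C)
    (hKC : ∀ κ ∈ K, -κ ∈ C)
    (hCK : C ∩ K = {0}) :
    ∃ x : X, (∀ κ ∈ K, κ ≠ 0 → 0 < κ x) ∧ (∀ c ∈ C, c x ≤ 0) :=
  stmt4_general K hK_closed hK_cone x₀ hx₀ C hC_closed hC_conv hC_cone hKC hCK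
end

section
/- Let X be a reflexive Banach space, K ⊆ X a norm-closed convex cone with K ∩ (-K) = {0} admitting a strictly positive continuous functional, and C ⊆ X a norm-closed convex cone with -K ⊆ C and C ∩ K = {0}. Then there exists a continuous linear functional ξ ∈ X* with ξ(x) > 0 for all x ∈ K \ {0} and ξ(x) ≤ 0 for all x ∈ C. -/
/-!
For each `n` the set `Aₙ = {x ∈ K | ‖x‖ ≤ n, 1 ≤ n η(x)}` is closed, convex and bounded, hence
weakly compact by reflexivity, and it misses `C`. Hahn–Banach in the weak topology separates it
from the cone `C` by some `ζₙ ≤ 0` on `C`, `ζₙ > 0` on `Aₙ`; since `-K ⊆ C`, each `ζₙ ≥ 0` on `K`.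
A series `ξ = ∑ wₙ ζₙ` with small positive weights is then `≤ 0` on `C` and `> 0` on
`K \ {0} = ⋃ₙ Aₙ`.
-/

open Set Metric NormedSpace

instance WeakSpace.instLocallyConvexSpace {E : Type*} [AddCommGroup E] [Module ℝ E]
    [TopologicalSpace E] : LocallyConvexSpace ℝ (WeakSpace ℝ E) :=
  WeakBilin.locallyConvexSpace

theorem isCompact_toWeakSpace_of_isBounded {X : Type*} [NormedAddCommGroup X] [NormedSpace ℝ X]
    (hrefl : Function.Surjective (inclusionInDoubleDual ℝ X)) {A : Set X}
    (hconv : Convex ℝ A) (hclosed : IsClosed A) (hbdd : Bornology.IsBounded A) :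
    IsCompact (toWeakSpace ℝ X '' A) := by
  have hweak : closure (toWeakSpace ℝ X '' A) = toWeakSpace ℝ X '' A := by
    rw [← hconv.toWeakSpace_closure ℝ, hclosed.closure_eq]
  rw [← hweak]
  refine isCompact_closure_of_isBounded ℝ X _
    (by rwa [(toWeakSpace ℝ X).injective.preimage_image]) fun φ _ ↦ ?_
  obtain ⟨x, hx⟩ := hrefl (WeakDual.toStrongDual φ)
  exact ⟨toWeakSpace ℝ X x, hx⟩

def weakProperCone {X : Type*} [NormedAddCommGroup X] [NormedSpace ℝ X]
    (C : Set X) (hconv : Convex ℝ C) (hclosed : IsClosed C)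
    (hcone : ∀ c : ℝ, 0 ≤ c → ∀ x ∈ C, c • x ∈ C) (hzero : (0 : X) ∈ C) :
    ProperCone ℝ (WeakSpace ℝ X) where
  carrier := toWeakSpace ℝ X '' C
  zero_mem' := ⟨0, hzero, map_zero _⟩
  add_mem' := by
    rintro _ _ ⟨x, hx, rfl⟩ ⟨y, hy, rfl⟩
    refine ⟨x + y, ?_, map_add _ _ _⟩
    convert hcone 2 zero_le_two _ (hconv hx hy (by norm_num : (0 : ℝ) ≤ 1 / 2)
      (by norm_num : (0 : ℝ) ≤ 1 / 2) (by norm_num)) using 1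
    module
  smul_mem' := by
    rintro c _ ⟨x, hx, rfl⟩
    exact ⟨(c : ℝ) • x, hcone c c.2 x hx, rfl⟩
  isClosed' := by
    show IsClosed (toWeakSpace ℝ X '' C)
    rw [← hclosed.closure_eq, hconv.toWeakSpace_closure ℝ]
    exact isClosed_closure

theorem exists_dual_nonpos_on_cone_pos_on_bounded {X : Type*} [NormedAddCommGroup X]
    [NormedSpace ℝ X] (hrefl : Function.Surjective (inclusionInDoubleDual ℝ X)) {A C : Set X}
    (hA_conv : Convex ℝ A) (hA_closed : IsClosed A) (hA_bdd : Bornology.IsBounded A)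
    (hC_conv : Convex ℝ C) (hC_closed : IsClosed C)
    (hC_cone : ∀ c : ℝ, 0 ≤ c → ∀ x ∈ C, c • x ∈ C) (hC_zero : (0 : X) ∈ C)
    (hAC : Disjoint A C) :
    ∃ ζ : StrongDual ℝ X, (∀ x ∈ C, ζ x ≤ 0) ∧ ∀ x ∈ A, 0 < ζ x := by
  obtain ⟨f, hfC, hfA⟩ :=
    (weakProperCone C hC_conv hC_closed hC_cone hC_zero).hyperplane_separation
    (hA_conv.linear_image (toWeakSpace ℝ X).toLinearMap)
    (isCompact_toWeakSpace_of_isBounded hrefl hA_conv hA_closed hA_bdd)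
    ((disjoint_image_iff (toWeakSpace ℝ X).injective).2 hAC)
  refine ⟨-(f ∘L toWeakSpaceCLM ℝ X), fun x hx ↦ ?_, fun x hx ↦ ?_⟩
  · simpa using hfC _ (mem_image_of_mem _ hx)
  · simpa using hfA _ (mem_image_of_mem _ hx)

theorem exists_pos_summable_smul {F : Type*} [NormedAddCommGroup F] [NormedSpace ℝ F]
    [CompleteSpace F] (v : ℕ → F) : ∃ w : ℕ → ℝ, (∀ n, 0 < w n) ∧ Summable fun n ↦ w n • v n := by
  refine ⟨fun n ↦ (1 / 2 : ℝ) ^ n / (1 + ‖v n‖), fun n ↦ by positivity, ?_⟩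
  refine .of_norm_bounded summable_geometric_two fun n ↦ ?_
  rw [norm_smul, Real.norm_of_nonneg (by positivity), div_mul_eq_mul_div,
    div_le_iff₀ (by positivity)]
  gcongr
  linarith

theorem exists_dual_nonpos_on_pos_on_iUnion {E : Type*} [NormedAddCommGroup E]
    [NormedSpace ℝ E] {C : Set E} {A : ℕ → Set E} (hAC : ∀ n, ∀ x ∈ A n, -x ∈ C)
    (hsep : ∀ n, ∃ ζ : StrongDual ℝ E, (∀ x ∈ C, ζ x ≤ 0) ∧ ∀ x ∈ A n, 0 < ζ x) :
    ∃ ξ : StrongDual ℝ E, (∀ x ∈ C, ξ x ≤ 0) ∧ ∀ x ∈ ⋃ n, A n, 0 < ξ x := by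
  choose ζ hζC hζA using hsep
  obtain ⟨w, hw, hsum⟩ := exists_pos_summable_smul ζ
  have happly x : HasSum (fun n ↦ w n * ζ n x) ((∑' n, w n • ζ n) x) := by
    simpa using hsum.hasSum.mapL (ContinuousLinearMap.apply ℝ ℝ x)
  refine ⟨∑' n, w n • ζ n, fun x hxC ↦ (happly x).nonpos fun n ↦
    mul_nonpos_of_nonneg_of_nonpos (hw n).le (hζC n x hxC), fun x hx ↦ ?_⟩
  obtain ⟨n, hxn⟩ := mem_iUnion.1 hx
  have hζ_nonneg m : 0 ≤ ζ m x := by simpa using hζC m (-x) (hAC n x hxn)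
  exact (mul_pos (hw n) (hζA n x hxn)).trans_le
    (le_hasSum (happly x) n fun m _ ↦ mul_nonneg (hw m).le (hζ_nonneg m))

theorem stmt5_general {X : Type*} [NormedAddCommGroup X] [NormedSpace ℝ X]
    (hrefl : Function.Surjective (NormedSpace.inclusionInDoubleDual ℝ X))
    (K : Set X) (hK_closed : IsClosed K) (hK_conv : Convex ℝ K)
    (η : X →L[ℝ] ℝ) (hη : ∀ x ∈ K, x ≠ 0 → 0 < η x)
    (C : Set X) (hC_closed : IsClosed C) (hC_conv : Convex ℝ C)
    (hC_cone : ∀ (c : ℝ), 0 ≤ c → ∀ x ∈ C, c • x ∈ C)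
    (hKC : ∀ x ∈ K, -x ∈ C)
    (hCK : C ∩ K = {0}) :
    ∃ ξ : X →L[ℝ] ℝ, (∀ x ∈ K, x ≠ 0 → 0 < ξ x) ∧ (∀ x ∈ C, ξ x ≤ 0) := by
  set A : ℕ → Set X := fun n ↦ K ∩ closedBall 0 n ∩ {x | 1 ≤ n * η x}
  have hsep n : ∃ ζ : StrongDual ℝ X, (∀ x ∈ C, ζ x ≤ 0) ∧ ∀ x ∈ A n, 0 < ζ x := by
    refine exists_dual_nonpos_on_cone_pos_on_bounded hrefl
      ((hK_conv.inter (convex_closedBall 0 n)).inter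
        (convex_halfSpace_ge ((n : ℝ) • η).isLinear 1))
      ((hK_closed.inter isClosed_closedBall).inter
        (isClosed_le continuous_const (by fun_prop)))
      (isBounded_closedBall.subset fun x hx ↦ hx.1.2) hC_conv hC_closed hC_cone (hCK.ge rfl).1
      (Set.disjoint_left.2 fun x hxA hxC ↦ ?_)
    obtain rfl : x = 0 := hCK.le ⟨hxC, hxA.1.1⟩
    exact absurd hxA.2 (by simp)
  obtain ⟨ξ, hξC, hξA⟩ :=
    exists_dual_nonpos_on_pos_on_iUnion (fun n x hx ↦ hKC x hx.1.1) hsep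
  refine ⟨ξ, fun x hxK hx0 ↦ hξA x ?_, hξC⟩
  have hηx := hη x hxK hx0
  obtain ⟨n, hn⟩ := exists_nat_ge (max ‖x‖ (η x)⁻¹)
  refine mem_iUnion.2 ⟨n, ⟨hxK, by simpa using (le_max_left _ _).trans hn⟩, ?_⟩
  exact (inv_le_iff_one_le_mul₀ hηx).1 ((le_max_right _ _).trans hn)

/-- Kreps–Yan theorem for reflexive Banach spaces: Let `X` be a reflexive
Banach space, `K ⊆ X` a norm-closed convex cone with `K ∩ (-K) = {0}` admitting a
strictly positive continuous functional, and `C ⊆ X` a norm-closed convex cone with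
`-K ⊆ C` and `C ∩ K = {0}`.  Then some `ξ ∈ X*` is strictly positive on `K` and
non-positive on `C`. -/
theorem stmt5 {X : Type*} [NormedAddCommGroup X] [NormedSpace ℝ X] [CompleteSpace X]
    (hrefl : Function.Surjective (NormedSpace.inclusionInDoubleDual ℝ X))
    (K : Set X) (hK_closed : IsClosed K) (hK_conv : Convex ℝ K)
    (hK_cone : ∀ (c : ℝ), 0 ≤ c → ∀ x ∈ K, c • x ∈ K)
    (hK_pointed : K ∩ (-K) = {0})
    (η : X →L[ℝ] ℝ) (hη : ∀ x ∈ K, x ≠ 0 → 0 < η x)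
    (C : Set X) (hC_closed : IsClosed C) (hC_conv : Convex ℝ C)
    (hC_cone : ∀ (c : ℝ), 0 ≤ c → ∀ x ∈ C, c • x ∈ C)
    (hKC : ∀ x ∈ K, -x ∈ C)
    (hCK : C ∩ K = {0}) :
    ∃ ξ : X →L[ℝ] ℝ, (∀ x ∈ K, x ≠ 0 → 0 < ξ x) ∧ (∀ x ∈ C, ξ x ≤ 0) :=
  stmt5_general hrefl K hK_closed hK_conv η hη C hC_closed hC_conv hC_cone hKC hCK
end

section
/- Let f₁, f₂ : X → (-∞, +∞] be convex functions on a Banach space X with dual Y, and suppose f₁ is finite and continuous on all of X. Then (f₁ + f₂)* = f₁* ⊕ f₂*, where ⊕ denotes infimal convolution on Y: (g₁ ⊕ g₂)(ξ) = inf{g₁(ξ₁) + g₂(ξ₂) : ξ₁ + ξ₂ = ξ}, and the infimum is attained. -/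
set_option maxHeartbeats 1000000


/-- sum rule for convex conjugates: if `f₁ : X → ℝ` is convex, finite
and continuous on all of `X`, and `f₂ : X → (-∞, +∞]` is proper convex, then
`(f₁ + f₂)* = f₁* ⊕ f₂*` (infimal convolution on the dual), and the infimum is
attained. -/
theorem stmt16 {X : Type*} [NormedAddCommGroup X] [NormedSpace ℝ X] [CompleteSpace X]
    (f₁ : X → ℝ) (hf₁_conv : ConvexOn ℝ Set.univ f₁) (hf₁_cont : Continuous f₁)
    (f₂ : X → EReal) (hf₂_nebot : ∀ x, f₂ x ≠ ⊥) (hf₂_proper : ∃ x, f₂ x ≠ ⊤)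
    (hf₂_conv : ∀ x y : X, ∀ a b : ℝ, 0 ≤ a → 0 ≤ b → a + b = 1 →
      f₂ (a • x + b • y) ≤ (a : EReal) * f₂ x + (b : EReal) * f₂ y)
    (conj₁ : (X →L[ℝ] ℝ) → EReal)
    (hconj₁ : ∀ ξ, conj₁ ξ = ⨆ x : X, (((ξ x : ℝ) : EReal) - ((f₁ x : ℝ) : EReal)))
    (conj₂ : (X →L[ℝ] ℝ) → EReal)
    (hconj₂ : ∀ ξ, conj₂ ξ = ⨆ x : X, (((ξ x : ℝ) : EReal) - f₂ x))
    (conjSum : (X →L[ℝ] ℝ) → EReal)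
    (hconjSum : ∀ ξ, conjSum ξ =
      ⨆ x : X, (((ξ x : ℝ) : EReal) - (((f₁ x : ℝ) : EReal) + f₂ x))) :
    ∀ ξ : X →L[ℝ] ℝ,
      (∃ ξ₁ ξ₂ : X →L[ℝ] ℝ, ξ₁ + ξ₂ = ξ ∧ conjSum ξ = conj₁ ξ₁ + conj₂ ξ₂) ∧
      (∀ ξ₁ ξ₂ : X →L[ℝ] ℝ, ξ₁ + ξ₂ = ξ → conjSum ξ ≤ conj₁ ξ₁ + conj₂ ξ₂) := by
  -- a point where f₂ is finite
  obtain ⟨x₀, hx₀⟩ := hf₂_proper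
  obtain ⟨r₀, hr₀⟩ : ∃ r : ℝ, f₂ x₀ = (r : EReal) := by
    lift f₂ x₀ to ℝ using ⟨hx₀, hf₂_nebot x₀⟩ with r hr
    exact ⟨r, rfl⟩
  intro ξ
  -- the easy direction
  have easy : ∀ ξ₁ ξ₂ : X →L[ℝ] ℝ, ξ₁ + ξ₂ = ξ → conjSum ξ ≤ conj₁ ξ₁ + conj₂ ξ₂ := by
    intro ξ₁ ξ₂ hsum
    rw [hconjSum]
    refine iSup_le fun x => ?_
    have hx : ξ₁ x + ξ₂ x = ξ x := by rw [← hsum]; rfl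
    have h1 : ((ξ₁ x : ℝ) : EReal) - ((f₁ x : ℝ) : EReal) ≤ conj₁ ξ₁ := by
      rw [hconj₁]; exact le_iSup (fun x => ((ξ₁ x : ℝ) : EReal) - ((f₁ x : ℝ) : EReal)) x
    have h2 : ((ξ₂ x : ℝ) : EReal) - f₂ x ≤ conj₂ ξ₂ := by
      rw [hconj₂]; exact le_iSup (fun x => ((ξ₂ x : ℝ) : EReal) - f₂ x) x
    have key : ((ξ x : ℝ) : EReal) - (((f₁ x : ℝ) : EReal) + f₂ x) ≤
        (((ξ₁ x : ℝ) : EReal) - ((f₁ x : ℝ) : EReal)) + (((ξ₂ x : ℝ) : EReal) - f₂ x) := by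
      rcases eq_or_ne (f₂ x) ⊤ with ht | ht
      · rw [ht]
        simp [EReal.coe_add_top]
      · lift f₂ x to ℝ using ⟨ht, hf₂_nebot x⟩ with r hr
        rw [← EReal.coe_add, ← EReal.coe_sub, ← EReal.coe_sub, ← EReal.coe_sub,
          ← EReal.coe_add, EReal.coe_le_coe_iff]
        linarith
    exact key.trans (add_le_add h1 h2)
  refine ⟨?_, easy⟩
  -- conjSum ξ is not ⊥
  have hne_bot : conjSum ξ ≠ ⊥ := by
    rw [hconjSum]
    intro h
    have hle : ((ξ x₀ : ℝ) : EReal) - (((f₁ x₀ : ℝ) : EReal) + f₂ x₀) ≤ ⊥ := by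
      rw [← h]
      exact le_iSup (fun x => ((ξ x : ℝ) : EReal) - (((f₁ x : ℝ) : EReal) + f₂ x)) x₀
    rw [hr₀, ← EReal.coe_add, ← EReal.coe_sub] at hle
    exact absurd (le_bot_iff.mp hle) (EReal.coe_ne_bot _)
  rcases eq_or_ne (conjSum ξ) ⊤ with htop | htop
  · -- trivial case : the conjugate of the sum is +∞
    refine ⟨0, ξ, by simp, ?_⟩
    have h := easy 0 ξ (by simp)
    rw [htop] at h ⊢
    exact (top_le_iff.mp h).symm
  -- main case: conjSum ξ = α is a real number
  obtain ⟨α, hα⟩ : ∃ a : ℝ, conjSum ξ = (a : EReal) := by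
    lift conjSum ξ to ℝ using ⟨htop, hne_bot⟩ with a ha
    exact ⟨a, rfl⟩
  -- the fundamental inequality: for x with f₂ x = r, ξ x - (f₁ x + r) ≤ α
  have hineq : ∀ (x : X) (r : ℝ), f₂ x = (r : EReal) → ξ x - (f₁ x + r) ≤ α := by
    intro x r hr
    have hle : ((ξ x : ℝ) : EReal) - (((f₁ x : ℝ) : EReal) + f₂ x) ≤ (α : EReal) := by
      rw [← hα, hconjSum]
      exact le_iSup (fun x => ((ξ x : ℝ) : EReal) - (((f₁ x : ℝ) : EReal) + f₂ x)) x
    rw [hr, ← EReal.coe_add, ← EReal.coe_sub, EReal.coe_le_coe_iff] at hle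
    exact hle
  -- the auxiliary convex continuous function g
  set g : X → ℝ := fun x => f₁ x - ξ x + α with hg_def
  have hg_cont : Continuous g :=
    (hf₁_cont.sub ξ.continuous).add continuous_const
  have hg_conv : ConvexOn ℝ Set.univ g := by
    refine ⟨convex_univ, fun x _ y _ a b ha hb hab => ?_⟩
    have h := hf₁_conv.2 (Set.mem_univ x) (Set.mem_univ y) ha hb hab
    simp only [hg_def, smul_eq_mul, map_add, map_smul]
    simp only [smul_eq_mul] at h
    have hαab : a * α + b * α = α := by rw [← add_mul, hab, one_mul]
    linarith
  -- the open convex set A (strict epigraph of g)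
  set A : Set (X × ℝ) := {p | g p.1 < p.2} with hA_def
  have hA_open : IsOpen A := isOpen_lt (hg_cont.comp continuous_fst) continuous_snd
  have hA_conv : Convex ℝ A := by
    intro p hp q hq a b ha hb hab
    simp only [hA_def, Set.mem_setOf_eq] at hp hq ⊢
    have h := hg_conv.2 (Set.mem_univ p.1) (Set.mem_univ q.1) ha hb hab
    have h2 : a • g p.1 + b • g q.1 < a • p.2 + b • q.2 := by
      rcases eq_or_lt_of_le ha with ha0 | ha0
      · have hb1 : b = 1 := by linarith
        simp only [← ha0, hb1, smul_eq_mul]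
        nlinarith [hq]
      · rcases eq_or_lt_of_le hb with hb0 | hb0
        · have ha1 : a = 1 := by linarith
          simp only [← hb0, ha1, smul_eq_mul]
          nlinarith [hp]
        · simp only [smul_eq_mul]
          nlinarith [hp, hq]
    exact lt_of_le_of_lt h h2
  -- the convex set B (hypograph of -f₂, on its effective domain)
  set B : Set (X × ℝ) := {p | ∃ r : ℝ, f₂ p.1 = (r : EReal) ∧ p.2 ≤ -r} with hB_def
  have hB_conv : Convex ℝ B := by
    intro p hp q hq a b ha hb hab
    obtain ⟨r, hr, hpr⟩ := hp
    obtain ⟨r', hr', hqr⟩ := hq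
    have hc := hf₂_conv p.1 q.1 a b ha hb hab
    rw [hr, hr'] at hc
    rw [← EReal.coe_mul, ← EReal.coe_mul, ← EReal.coe_add] at hc
    have hnetop : f₂ (a • p.1 + b • q.1) ≠ ⊤ :=
      fun h => by rw [h] at hc; exact absurd (top_le_iff.mp hc) (EReal.coe_ne_top _)
    obtain ⟨r'', hr''⟩ : ∃ s : ℝ, f₂ (a • p.1 + b • q.1) = (s : EReal) := by
      lift f₂ (a • p.1 + b • q.1) to ℝ using ⟨hnetop, hf₂_nebot _⟩ with s hs
      exact ⟨s, rfl⟩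
    rw [hr''] at hc
    rw [EReal.coe_le_coe_iff] at hc
    refine ⟨r'', by exact hr'', ?_⟩
    have : (a • p + b • q).2 = a * p.2 + b * q.2 := rfl
    rw [this]
    nlinarith [mul_le_mul_of_nonneg_left hpr ha, mul_le_mul_of_nonneg_left hqr hb]
  -- A and B are disjoint
  have hdisj : Disjoint A B := by
    rw [Set.disjoint_left]
    rintro p hpA ⟨r, hr, hpr⟩
    have h1 := hineq p.1 r hr
    have h2 : g p.1 < p.2 := hpA
    simp only [hg_def] at h2
    linarith
  -- separate
  obtain ⟨F, u, hFA, hFB⟩ := geometric_hahn_banach_open hA_conv hA_open hB_conv hdisj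
  set η : X →L[ℝ] ℝ := F.comp (ContinuousLinearMap.inl ℝ X ℝ) with hη_def
  set s : ℝ := F (0, 1) with hs_def
  have hF : ∀ (x : X) (t : ℝ), F (x, t) = η x + t * s := by
    intro x t
    have hxt : (x, t) = (x, (0:ℝ)) + t • ((0:X), (1:ℝ)) := by
      simp [Prod.ext_iff]
    rw [hxt, map_add, map_smul, smul_eq_mul]
    rfl
  -- s < 0
  have hmemA : ∀ (x : X) (t : ℝ), g x < t → η x + t * s < u := by
    intro x t ht
    have := hFA (x, t) ht
    rwa [hF] at this
  have hs_neg : s < 0 := by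
    rcases lt_trichotomy s 0 with h | h | h
    · exact h
    · exfalso
      have h1 := hmemA x₀ (g x₀ + 1) (by linarith)
      have h2 := hFB (x₀, -r₀) ⟨r₀, hr₀, le_refl _⟩
      rw [hF] at h2
      rw [h] at h1 h2
      linarith
    · exfalso
      set t : ℝ := max (g x₀ + 1) ((u - η x₀ + 1) / s) with ht_def
      have h1 := hmemA x₀ t (lt_of_lt_of_le (by linarith) (le_max_left _ _))
      have h2 : (u - η x₀ + 1) / s ≤ t := le_max_right _ _
      have h3 : (u - η x₀ + 1) ≤ t * s := by
        rw [div_le_iff₀ h] at h2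
        linarith
      linarith
  set σ : ℝ := -s with hσ_def
  have hσ_pos : 0 < σ := by simp [hσ_def]; linarith
  set ζ : X →L[ℝ] ℝ := σ⁻¹ • η with hζ_def
  set c : ℝ := u / σ with hc_def
  have hζx : ∀ x, ζ x = η x / σ := by
    intro x
    simp [hζ_def, div_eq_inv_mul]
  -- claim 1 : ζ x - c ≤ g x for all x
  have claim1 : ∀ x : X, ζ x - c ≤ g x := by
    intro x
    refine le_of_forall_pos_lt_add fun ε hε => ?_
    have h := hmemA x (g x + ε) (by linarith)
    have : η x - u < (g x + ε) * σ := by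
      simp only [hσ_def]
      nlinarith
    rw [hζx, hc_def]
    rw [div_sub_div_same, div_lt_iff₀ hσ_pos]
    linarith
  -- claim 2 : c ≤ ζ x + r whenever f₂ x = r
  have claim2 : ∀ (x : X) (r : ℝ), f₂ x = (r : EReal) → c ≤ ζ x + r := by
    intro x r hr
    have h := hFB (x, -r) ⟨r, hr, le_refl _⟩
    rw [hF] at h
    have hsσ : s = -σ := by simp [hσ_def]
    rw [hsσ] at h
    have h' : u ≤ η x + r * σ := by nlinarith [h]
    rw [hζx, hc_def, div_le_iff₀ hσ_pos]
    have heq : (η x / σ + r) * σ = η x + r * σ := by field_simp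
    rw [heq]
    exact h'
  -- the decomposition
  refine ⟨ξ + ζ, -ζ, by abel, ?_⟩
  have hb1 : conj₁ (ξ + ζ) ≤ ((α + c : ℝ) : EReal) := by
    rw [hconj₁]
    refine iSup_le fun x => ?_
    have hval : (ξ + ζ) x = ξ x + ζ x := rfl
    rw [hval, ← EReal.coe_sub, EReal.coe_le_coe_iff]
    have h1 := claim1 x
    simp only [hg_def] at h1
    linarith
  have hb2 : conj₂ (-ζ) ≤ ((-c : ℝ) : EReal) := by
    rw [hconj₂]
    refine iSup_le fun x => ?_
    rcases eq_or_ne (f₂ x) ⊤ with ht | ht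
    · rw [ht]
      simp
    · lift f₂ x to ℝ using ⟨ht, hf₂_nebot x⟩ with r hr
      have h2 := claim2 x r hr.symm
      have hval : (-ζ) x = -(ζ x) := rfl
      rw [hval, ← EReal.coe_sub, EReal.coe_le_coe_iff]
      linarith
  have hub : conj₁ (ξ + ζ) + conj₂ (-ζ) ≤ conjSum ξ := by
    rw [hα]
    calc conj₁ (ξ + ζ) + conj₂ (-ζ) ≤ ((α + c : ℝ) : EReal) + ((-c : ℝ) : EReal) :=
          add_le_add hb1 hb2
      _ = (α : EReal) := by rw [← EReal.coe_add]; norm_num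
  exact le_antisymm (easy (ξ + ζ) (-ζ) (by abel)) hub
end
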